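/- Under the setting of the discrete error estimate (grid t_i = i·h with h > 0; L, V, μ > 0; Δ = ⌈L/(V·h)⌉ ≤ N; q₀ ≥ 0; (Q_i)_{i=0}^N nondecreasing and nonnegative; Q̂₀ = 0, Q̂_i = q₀ + Q_i; Q̂ the left-continuous piecewise-linear shifted inflow vanishing on (−∞,0]; U_i = min_{0 ≤ j ≤ i−Δ}(Q̂_j − μ t_j) + (t_i − L/V)μ; U(t, L) = inf_{τ ≤ t − L/V}(Q̂(τ) − μτ) + (t − L/V)μ), if in addition L/(V·h) is an integer, then U_i = U(t_i, L) for every Δ ≤ i ≤ N; that is, the discrete Lax formula is exact. -/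
import Mathlib


/-- Exactness of the discrete Lax formula: if the throughput time `L/V` is a multiple of the
time step `h` (i.e. `L/(Vh)` is an integer), then the discrete Lax formula coincides with the
continuous-time exit flow at every grid point. -/
theorem discrete_lax_exact_of_integer (h : ℝ) (hh : 0 < h) (N : ℕ) (L V μ : ℝ)
    (hL : 0 < L) (hV : 0 < V) (hμ : 0 < μ) (hΔN : ⌈L / (V * h)⌉₊ ≤ N)
    (q0 : ℝ) (hq0 : 0 ≤ q0) (Q : ℕ → ℝ)
    (hQmono : ∀ i j : ℕ, i ≤ j → j ≤ N → Q i ≤ Q j) (hQnonneg : ∀ i ≤ N, 0 ≤ Q i)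
    (Qc : ℝ → ℝ) (hQc0 : ∀ τ : ℝ, τ ≤ 0 → Qc τ = 0)
    (hQcInterp : ∀ j : ℕ, j < N → ∀ τ : ℝ, (j : ℝ) * h < τ → τ ≤ ((j : ℝ) + 1) * h →
      Qc τ = q0 + Q j + (Q (j + 1) - Q j) * (τ - (j : ℝ) * h) / h)
    (hint : ∃ m : ℕ, L / (V * h) = (m : ℝ)) :
    let Δ : ℕ := ⌈L / (V * h)⌉₊
    let Qhat : ℕ → ℝ := fun i => if i = 0 then 0 else q0 + Q i
    let U : ℕ → ℝ := fun i =>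
      (Finset.range (i - Δ + 1)).inf' (Finset.nonempty_range_iff.mpr (by omega))
          (fun j => Qhat j - μ * (j * h)) +
        ((i : ℝ) * h - L / V) * μ
    let Uc : ℝ → ℝ := fun t =>
      sInf ((fun τ => Qc τ - μ * τ) '' Set.Iic (t - L / V)) + (t - L / V) * μ
    ∀ i : ℕ, Δ ≤ i → i ≤ N → U i = Uc ((i : ℝ) * h) := by
  obtain ⟨m, hm⟩ := hint
  intro Δ Qhat U Uc i hΔi hiN
  have hΔ : Δ = m := by
    show ⌈L / (V * h)⌉₊ = m
    rw [hm, Nat.ceil_natCast]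
  rw [← div_div] at hm
  have hLV : L / V = (m : ℝ) * h := (div_eq_iff hh.ne').mp hm
  set n := i - Δ with hn
  have hmn : m ≤ i := hΔ ▸ hΔi
  have hT : (i : ℝ) * h - L / V = (n : ℝ) * h := by
    rw [hLV, hn, hΔ]
    push_cast [Nat.cast_sub hmn]
    ring
  have hnN : n ≤ N := le_trans (Nat.sub_le _ _) hiN
  set g : ℕ → ℝ := fun j => Qhat j - μ * (j * h) with hg
  set M := (Finset.range (n + 1)).inf' (Finset.nonempty_range_iff.mpr (Nat.succ_ne_zero n)) g
    with hM
  -- grid values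
  have hgrid : ∀ j : ℕ, j ≤ n → Qc ((j : ℝ) * h) = Qhat j := by
    intro j hj
    match j with
    | 0 => simp [Qhat, hQc0 0 le_rfl]
    | k + 1 =>
      have hkN : k < N := lt_of_lt_of_le (Nat.lt_of_succ_le hj) hnN
      have hlt : (k : ℝ) * h < ((k + 1 : ℕ) : ℝ) * h := by push_cast; nlinarith
      have hle : ((k + 1 : ℕ) : ℝ) * h ≤ ((k : ℝ) + 1) * h := le_of_eq (by push_cast; ring)
      have hv := hQcInterp k hkN (((k + 1 : ℕ) : ℝ) * h) hlt hle
      rw [hv]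
      have hQh : Qhat (k + 1) = q0 + Q (k + 1) := by simp [Qhat]
      rw [hQh]
      push_cast
      field_simp
      ring
  have hMle : ∀ j : ℕ, j ≤ n → M ≤ q0 + Q j - μ * ((j : ℝ) * h) := by
    intro j hj
    have h1 : M ≤ g j :=
      Finset.inf'_le _ (Finset.mem_range.mpr (Nat.lt_succ_of_le hj))
    refine h1.trans ?_
    simp only [hg, Qhat]
    split
    · have hQ0 : 0 ≤ Q j := by
        next hj0 => subst hj0; exact hQnonneg 0 (Nat.zero_le N)
      have : (0:ℝ) ≤ q0 + Q j := by linarith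
      linarith
    · exact le_refl _
  -- lower bound
  have hlb : ∀ τ : ℝ, τ ≤ (n : ℝ) * h → M ≤ Qc τ - μ * τ := by
    intro τ hτ
    rcases le_or_gt τ 0 with h0 | h0
    · rw [hQc0 τ h0]
      have hM0 : M ≤ g 0 := Finset.inf'_le _ (Finset.mem_range.mpr n.succ_pos)
      have hg0 : g 0 = 0 := by simp [hg, Qhat]
      nlinarith
    · set k := ⌈τ / h⌉₊ with hk
      have hτh : 0 < τ / h := div_pos h0 hh
      have hk1 : 1 ≤ k := Nat.one_le_iff_ne_zero.mpr (by positivity)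
      have hkub : τ ≤ (k : ℝ) * h := by
        have h1 := Nat.le_ceil (τ / h)
        calc τ = τ / h * h := by field_simp
          _ ≤ (k : ℝ) * h := mul_le_mul_of_nonneg_right h1 hh.le
      have hklb : ((k : ℝ) - 1) * h < τ := by
        have h1 := Nat.ceil_lt_add_one hτh.le
        have h2 : (k : ℝ) - 1 < τ / h := by rw [hk]; push_cast; linarith
        calc ((k : ℝ) - 1) * h < (τ / h) * h := by nlinarith
          _ = τ := by field_simp
      have hkn : k ≤ n := Nat.ceil_le.mpr (by rw [div_le_iff₀ hh]; exact hτ)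
      obtain ⟨j, hkj⟩ : ∃ j, k = j + 1 := ⟨k - 1, (Nat.succ_pred_eq_of_pos hk1).symm⟩
      rw [hkj] at hkub hklb hkn
      have hjN : j < N := lt_of_lt_of_le hkn hnN
      have hjlt : (j : ℝ) * h < τ := by push_cast at hklb; linarith [hklb]
      have hjub : τ ≤ ((j : ℝ) + 1) * h := by push_cast at hkub; linarith [hkub]
      have hQcτ := hQcInterp j hjN τ hjlt hjub
      set s := (τ - (j : ℝ) * h) / h with hs
      have hs0 : 0 ≤ s := div_nonneg (by linarith) hh.le
      have hs1 : s ≤ 1 := by rw [hs, div_le_one hh]; linarith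
      have hA := hMle j (le_of_lt hkn)
      have hB := hMle (j + 1) hkn
      push_cast at hB
      have key : Qc τ - μ * τ =
          (1 - s) * (q0 + Q j - μ * ((j : ℝ) * h)) +
            s * (q0 + Q (j + 1) - μ * (((j : ℝ) + 1) * h)) := by
        rw [hQcτ, hs]
        field_simp
        ring
      rw [key]
      have h1 : (1 - s) * M ≤ (1 - s) * (q0 + Q j - μ * ((j : ℝ) * h)) :=
        mul_le_mul_of_nonneg_left hA (by linarith)
      have h2 : s * M ≤ s * (q0 + Q (j + 1) - μ * (((j : ℝ) + 1) * h)) :=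
        mul_le_mul_of_nonneg_left hB hs0
      have h3 : (1 - s) * M + s * M = M := by ring
      linarith
  -- the sInf equals the finite min
  have hbdd : ∀ x ∈ (fun τ => Qc τ - μ * τ) '' Set.Iic ((n : ℝ) * h), M ≤ x := by
    rintro x ⟨τ, hτ, rfl⟩
    exact hlb τ hτ
  have hset : sInf ((fun τ => Qc τ - μ * τ) '' Set.Iic ((i : ℝ) * h - L / V)) = M := by
    rw [hT]
    apply le_antisymm
    · obtain ⟨j0, hj0mem, hj0⟩ :=
        Finset.exists_mem_eq_inf' (Finset.nonempty_range_iff.mpr (Nat.succ_ne_zero n)) g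
      have hj0n : j0 ≤ n := Nat.lt_succ_iff.mp (Finset.mem_range.mp hj0mem)
      have hmem : g j0 ∈ (fun τ => Qc τ - μ * τ) '' Set.Iic ((n : ℝ) * h) := by
        refine ⟨(j0 : ℝ) * h, ?_, ?_⟩
        · exact mul_le_mul_of_nonneg_right (by exact_mod_cast hj0n) hh.le
        · simp only [hgrid j0 hj0n, hg]
      rw [hM, hj0]
      exact csInf_le ⟨M, hbdd⟩ hmem
    · refine le_csInf ⟨Qc 0 - μ * 0, 0, ?_, rfl⟩ hbdd
      exact mul_nonneg (Nat.cast_nonneg n) hh.le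
  show (Finset.range (i - Δ + 1)).inf' _ (fun j => Qhat j - μ * (j * h)) +
      ((i : ℝ) * h - L / V) * μ =
    sInf ((fun τ => Qc τ - μ * τ) '' Set.Iic ((i : ℝ) * h - L / V)) +
      ((i : ℝ) * h - L / V) * μ
  rw [hset]
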